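/- arXiv:2310.14306 — 2 statements merged into one kernel-verified Lean document; each statement's English description precedes it below -/
import Mathlib

section
/- Let p ≥ 3 be an odd natural number, let M > 0, K, L be real numbers, set b = −K/(2M) and a = L/M − K²/(4M²), and assume a > 0. Then ∫_{−∞}^{∞} e^{−½M(z² + (K/M)z + L/M)} z^{p−1} dz = a · e^{−½Ma} · Σ_{j=0}^{(p−1)/2} C(p−1, p−1−2j) · a^{2j} · b^{p−1−2j} · (½Ma²)^{−(½+j)} · Γ(j + ½), where C(n,k) is the binomial coefficient and Γ is the Gamma function. -/
open Finset MeasureTheory Real Set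

/-!
Completing the square, `-(M/2)(z² + (K/M)z + L/M) = -(M/2)a - (M/2)(z - b)²`, and shifting
`z ↦ z + b` turn the integral into `e^{-Ma/2} ∫ e^{-(M/2)u²} (u + b)^{p-1} du`. Expanding binomially,
the odd Gaussian moments vanish by symmetry and the even ones are
`∫ u^{2j} e^{-cu²} du = c^{-(j+1/2)} Γ(j + 1/2)`. The powers of `a` on the right-hand side cancel,
since `a · a^{2j} · (c a²)^{-(1/2+j)} = c^{-(1/2+j)}`.
-/

theorem integral_eq_zero_of_odd {G E : Type*} [AddGroup G] [MeasurableSpace G] [MeasurableNeg G]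
    [NormedAddCommGroup E] [NormedSpace ℝ E] (μ : Measure G) [μ.IsNegInvariant] {f : G → E}
    (hf : ∀ x, f (-x) = -f x) : ∫ x, f x ∂μ = 0 := by
  have h := integral_neg_eq_self f μ
  simp only [hf, integral_neg] at h
  have h2 : (2 : ℝ) • ∫ x, f x ∂μ = 0 := by
    rw [two_smul]
    nth_rw 1 [← h]
    exact neg_add_cancel _
  exact (smul_eq_zero.mp h2).resolve_left two_ne_zero

theorem Finset.sum_range_two_mul_add_one_of_odd_eq_zero {M : Type*} [AddCommMonoid M]
    {f : ℕ → M} (hf : ∀ k, Odd k → f k = 0) (m : ℕ) :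
    ∑ k ∈ range (2 * m + 1), f k = ∑ j ∈ range (m + 1), f (2 * j) := by
  induction m with
  | zero => simp
  | succ m ih =>
    rw [show 2 * (m + 1) + 1 = 2 * m + 1 + 1 + 1 by ring, sum_range_succ, sum_range_succ, ih,
      hf _ (odd_two_mul_add_one m), add_zero, sum_range_succ (fun j => f (2 * j)) (m + 1)]
    rfl

theorem integrable_pow_mul_exp_neg_mul_sq {c : ℝ} (hc : 0 < c) (n : ℕ) :
    Integrable fun x : ℝ => x ^ n * exp (-c * x ^ 2) := by
  simpa [rpow_natCast] using
    integrable_rpow_mul_exp_neg_mul_sq hc (neg_one_lt_zero.trans_le n.cast_nonneg)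

theorem integral_pow_mul_exp_neg_mul_sq_of_odd (c : ℝ) {n : ℕ} (hn : Odd n) :
    ∫ x : ℝ, x ^ n * exp (-c * x ^ 2) = 0 :=
  integral_eq_zero_of_odd volume fun x => by rw [hn.neg_pow, neg_sq, neg_mul]

theorem integral_pow_two_mul_mul_exp_neg_mul_sq {c : ℝ} (hc : 0 < c) (j : ℕ) :
    ∫ x : ℝ, x ^ (2 * j) * exp (-c * x ^ 2) = c ^ (-(1 / 2 + j : ℝ)) * Gamma (j + 1 / 2) := by
  have h_half : ∫ x in Ioi (0 : ℝ), x ^ (2 * j) * exp (-c * x ^ 2)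
      = c ^ (-((2 * j : ℕ) + 1 : ℝ) / 2) * (1 / 2) * Gamma (((2 * j : ℕ) + 1 : ℝ) / 2) := by
    rw [← integral_rpow_mul_exp_neg_mul_rpow two_pos
      (neg_one_lt_zero.trans_le (2 * j).cast_nonneg) hc]
    refine setIntegral_congr_fun measurableSet_Ioi fun x _ => ?_
    norm_cast
  have h_full := integral_comp_abs (f := fun x : ℝ => x ^ (2 * j) * exp (-c * x ^ 2))
  simp only [pow_mul, sq_abs] at h_full
  simp only [pow_mul] at h_half ⊢
  rw [h_full, h_half]
  push_cast
  rw [show -(2 * (j : ℝ) + 1) / 2 = -(1 / 2 + j) by ring,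
    show (2 * (j : ℝ) + 1) / 2 = j + 1 / 2 by ring]
  ring

theorem integral_exp_neg_mul_sub_sq_mul_pow {c : ℝ} (hc : 0 < c) (b : ℝ) (n : ℕ) :
    ∫ z : ℝ, exp (-c * (z - b) ^ 2) * z ^ n
      = ∑ k ∈ range (n + 1), n.choose k * b ^ (n - k) * ∫ x : ℝ, x ^ k * exp (-c * x ^ 2) := by
  have h_binom : ∀ x : ℝ, exp (-c * x ^ 2) * (x + b) ^ n
      = ∑ k ∈ range (n + 1), n.choose k * b ^ (n - k) * (x ^ k * exp (-c * x ^ 2)) := by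
    intro x
    rw [add_pow, mul_sum]
    exact sum_congr rfl fun k _ => by ring
  rw [← integral_add_right_eq_self _ b]
  simp only [add_sub_cancel_right, h_binom]
  rw [integral_finsetSum _ fun k _ => (integrable_pow_mul_exp_neg_mul_sq hc k).const_mul _]
  exact sum_congr rfl fun k _ => integral_const_mul _ _

theorem integral_exp_neg_mul_sub_sq_mul_pow_two_mul {c : ℝ} (hc : 0 < c) (b : ℝ) (m : ℕ) :
    ∫ z : ℝ, exp (-c * (z - b) ^ 2) * z ^ (2 * m)
      = ∑ j ∈ range (m + 1), (2 * m).choose (2 * j) * b ^ (2 * m - 2 * j) *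
          (c ^ (-(1 / 2 + j : ℝ)) * Gamma (j + 1 / 2)) := by
  rw [integral_exp_neg_mul_sub_sq_mul_pow hc, sum_range_two_mul_add_one_of_odd_eq_zero]
  · simp only [integral_pow_two_mul_mul_exp_neg_mul_sq hc]
  · intro k hk
    rw [integral_pow_mul_exp_neg_mul_sq_of_odd c hk, mul_zero]

theorem mul_sq_rpow_neg_half_add {a c : ℝ} (ha : 0 < a) (hc : 0 ≤ c) (j : ℕ) :
    (c * a ^ 2) ^ (-(1 / 2 + j : ℝ)) = c ^ (-(1 / 2 + j : ℝ)) / a ^ (2 * j + 1) := by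
  rw [mul_rpow hc (by positivity), ← rpow_natCast a 2, ← rpow_mul ha.le,
    show ((2 : ℕ) : ℝ) * -(1 / 2 + j : ℝ) = -((2 * j + 1 : ℕ) : ℝ) by push_cast; ring,
    rpow_neg ha.le, rpow_natCast]
  exact (div_eq_mul_inv _ _).symm

theorem normal_ratio_density_odd_general (p : ℕ) (hodd : Odd p)
    (M K L b a : ℝ) (hM : 0 < M)
    (hb : b = -K / (2 * M)) (ha : a = L / M - K ^ 2 / (4 * M ^ 2)) (ha' : 0 < a) :
    ∫ z : ℝ, Real.exp (-(1 / 2) * M * (z ^ 2 + (K / M) * z + L / M)) * z ^ (p - 1) =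
      a * Real.exp (-(1 / 2) * M * a) *
        ∑ j ∈ Finset.range ((p - 1) / 2 + 1),
          (Nat.choose (p - 1) (p - 1 - 2 * j) : ℝ) * a ^ (2 * j) * b ^ (p - 1 - 2 * j) *
            ((1 / 2) * M * a ^ 2) ^ (-(1 / 2 + (j : ℝ))) * Real.Gamma ((j : ℝ) + 1 / 2) := by
  obtain ⟨m, rfl⟩ := hodd
  have hm : 2 * m / 2 = m := by omega
  simp only [Nat.add_sub_cancel, hm]
  have h_square : ∀ z : ℝ, -(1 / 2) * M * (z ^ 2 + K / M * z + L / M)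
      = -(1 / 2) * M * a + -(1 / 2 * M) * (z - b) ^ 2 := by
    intro z
    rw [hb, ha]
    field_simp
    ring
  simp only [h_square, exp_add, mul_assoc (exp _), integral_const_mul,
    integral_exp_neg_mul_sub_sq_mul_pow_two_mul (by positivity : 0 < 1 / 2 * M), mul_sum]
  refine sum_congr rfl fun j hj => ?_
  rw [Nat.choose_symm (by rw [Finset.mem_range] at hj; omega), mul_sq_rpow_neg_half_add ha' (by positivity)]
  field_simp
  ring

/-- Odd-`p` normal-ratio density integral: for odd `p ≥ 3`, `M > 0`,
`b = -K/(2M)`, `a = L/M - K²/(4M²) > 0`,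
`∫ e^{-½M(z² + (K/M)z + L/M)} z^{p-1} dz
  = a e^{-½Ma} Σ_{j=0}^{(p-1)/2} C(p-1, p-1-2j) a^{2j} b^{p-1-2j}
      (½Ma²)^{-(½+j)} Γ(j + ½)`. -/
theorem normal_ratio_density_odd (p : ℕ) (hp : 3 ≤ p) (hodd : Odd p)
    (M K L b a : ℝ) (hM : 0 < M)
    (hb : b = -K / (2 * M)) (ha : a = L / M - K ^ 2 / (4 * M ^ 2)) (ha' : 0 < a) :
    ∫ z : ℝ, Real.exp (-(1 / 2) * M * (z ^ 2 + (K / M) * z + L / M)) * z ^ (p - 1) =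
      a * Real.exp (-(1 / 2) * M * a) *
        ∑ j ∈ Finset.range ((p - 1) / 2 + 1),
          (Nat.choose (p - 1) (p - 1 - 2 * j) : ℝ) * a ^ (2 * j) * b ^ (p - 1 - 2 * j) *
            ((1 / 2) * M * a ^ 2) ^ (-(1 / 2 + (j : ℝ))) * Real.Gamma ((j : ℝ) + 1 / 2) :=
  normal_ratio_density_odd_general p hodd M K L b a hM hb ha ha'
end

section
/- Let p ≥ 2 be an even natural number, let M > 0, K, L be real numbers, set b = −K/(2M) and a = L/M − K²/(4M²), and assume a > 0 and b > 0. Then ∫_{−∞}^{∞} e^{−½M(z² + (K/M)z + L/M)} |z|^{p−1} dz = 2 a e^{−½Ma} · [ Σ_{i=1}^{p/2} C(p−1, p−2i) · a^{2i−1} · b^{p−2i} · ∫_{b/a}^{∞} e^{−½Ma²u²} u^{2i−1} du + Σ_{i=0}^{(p−2)/2} C(p−1, p−2i−1) · a^{2i} · b^{p−1−2i} · ∫_{0}^{b/a} e^{−½Ma²u²} u^{2i} du ]. -/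
open MeasureTheory intervalIntegral Finset

/-!
Completing the square, the integrand is `e^{-Ma/2} e^{-M(z-b)²/2} |z|^{p-1}`, and the
substitution `z = a u + b` turns the integral into `a e^{-Ma/2} ∫ g(u) |a u + b|^q du` with
`g(u) = e^{-Ma²u²/2}` even and `q = p - 1` odd. Folding the line onto `(0, ∞)` by evenness of `g`
gives the integrand `g(u) (|b + a u|^q + |b - a u|^q)`. For `a u ≤ b` both absolute values can be
dropped and the binomial expansion keeps only the even powers of `u`; for `a u > b` the second term
is `-(b - a u)^q` since `q` is odd, and only the odd powers survive.
-/

theorem add_pow_add_neg_add_pow {R : Type*} [CommRing R] (x y : R) (n : ℕ) :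
    (x + y) ^ n + (-x + y) ^ n =
      2 * ∑ k ∈ (range (n + 1)).filter Even, x ^ k * y ^ (n - k) * n.choose k := by
  rw [add_pow, add_pow, ← sum_add_distrib, sum_filter, mul_sum]
  refine sum_congr rfl fun k _ => ?_
  rcases Nat.even_or_odd k with hk | hk
  · simp only [hk.neg_pow, hk, if_true]; ring
  · simp only [hk.neg_pow, Nat.not_even_iff_odd.mpr hk, if_false]; ring

theorem add_pow_sub_neg_add_pow {R : Type*} [CommRing R] (x y : R) (n : ℕ) :
    (x + y) ^ n - (-x + y) ^ n =
      2 * ∑ k ∈ (range (n + 1)).filter (fun k => ¬Even k), x ^ k * y ^ (n - k) * n.choose k := by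
  rw [add_pow, add_pow, ← sum_sub_distrib, sum_filter, mul_sum]
  refine sum_congr rfl fun k _ => ?_
  rcases Nat.even_or_odd k with hk | hk
  · simp only [hk.neg_pow, hk, not_true, if_false]; ring
  · simp only [hk.neg_pow, Nat.not_even_iff_odd.mpr hk, not_false_eq_true, if_true]; ring

theorem abs_add_pow_add_abs_neg_add_pow_of_le {R : Type*} [CommRing R] [LinearOrder R]
    [IsStrictOrderedRing R] {x y : R} (hx : 0 ≤ x) (hxy : x ≤ y) (n : ℕ) :
    |x + y| ^ n + |-x + y| ^ n =
      2 * ∑ k ∈ (range (n + 1)).filter Even, x ^ k * y ^ (n - k) * n.choose k := by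
  rw [abs_of_nonneg (by linarith), abs_of_nonneg (by linarith), add_pow_add_neg_add_pow]

theorem abs_add_pow_add_abs_neg_add_pow_of_ge {R : Type*} [CommRing R] [LinearOrder R]
    [IsStrictOrderedRing R] {x y : R} (hy : 0 ≤ y) (hyx : y ≤ x) {n : ℕ} (hn : Odd n) :
    |x + y| ^ n + |-x + y| ^ n =
      2 * ∑ k ∈ (range (n + 1)).filter (fun k => ¬Even k), x ^ k * y ^ (n - k) * n.choose k := by
  rw [abs_of_nonneg (by linarith), abs_of_nonpos (by linarith), hn.neg_pow, ← sub_eq_add_neg,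
    add_pow_sub_neg_add_pow]

theorem sum_filter_even_range_two_mul {M : Type*} [AddCommMonoid M] (f : ℕ → M) (m : ℕ) :
    ∑ k ∈ (range (2 * m)).filter Even, f k = ∑ i ∈ range m, f (2 * i) := by
  induction m with
  | zero => simp
  | succ m ih =>
    rw [sum_filter] at ih ⊢
    rw [show 2 * (m + 1) = 2 * m + 1 + 1 by ring, sum_range_succ, sum_range_succ, ih,
      sum_range_succ]
    simp

theorem sum_filter_odd_range_two_mul {M : Type*} [AddCommMonoid M] (f : ℕ → M) (m : ℕ) :
    ∑ k ∈ (range (2 * m)).filter (fun k => ¬Even k), f k = ∑ i ∈ Icc 1 m, f (2 * i - 1) := by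
  induction m with
  | zero => simp
  | succ m ih =>
    rw [sum_filter] at ih ⊢
    rw [show 2 * (m + 1) = 2 * m + 1 + 1 by ring, sum_range_succ, sum_range_succ, ih,
      sum_Icc_succ_top (by omega)]
    simp [show 2 * (m + 1) - 1 = 2 * m + 1 by omega]

theorem integrable_exp_neg_mul_sq_mul_pow {c : ℝ} (hc : 0 < c) (n : ℕ) :
    Integrable fun u : ℝ => Real.exp (-c * u ^ 2) * u ^ n := by
  simpa [mul_comm] using
    integrable_rpow_mul_exp_neg_mul_sq hc (s := n) (by linarith [n.cast_nonneg (α := ℝ)])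

theorem integral_eq_integral_Ioi_add_comp_neg {E : Type*} [NormedAddCommGroup E]
    [NormedSpace ℝ E] {f : ℝ → E} (hf : Integrable f) :
    ∫ x, f x = ∫ x in Set.Ioi 0, (f x + f (-x)) := by
  rw [integral_add hf.integrableOn hf.comp_neg.integrableOn, integral_comp_neg_Ioi, neg_zero,
    add_comm, integral_Iic_add_Ioi hf.integrableOn hf.integrableOn]

theorem integral_eq_mul_integral_comp_mul_add (f : ℝ → ℝ) {a : ℝ} (ha : 0 < a) (b : ℝ) :
    ∫ z, f z = a * ∫ u, f (a * u + b) := by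
  rw [Measure.integral_comp_mul_left (fun z => f (z + b)), integral_add_right_eq_self,
    smul_eq_mul, abs_inv, abs_of_pos ha, mul_inv_cancel_left₀ ha.ne']

theorem integral_mul_sum_pow {μ : Measure ℝ} {g : ℝ → ℝ} {t : Finset ℕ} (c : ℕ → ℝ)
    (hg : ∀ k ∈ t, Integrable (fun u => g u * u ^ k) μ) :
    ∫ u, g u * ∑ k ∈ t, c k * u ^ k ∂μ = ∑ k ∈ t, c k * ∫ u, g u * u ^ k ∂μ := by
  have hsum : (fun u => g u * ∑ k ∈ t, c k * u ^ k) = fun u => ∑ k ∈ t, c k * (g u * u ^ k) := by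
    ext u
    rw [mul_sum]
    exact sum_congr rfl fun _ _ => by ring
  rw [hsum, integral_finsetSum _ fun k hk => (hg k hk).const_mul (c k)]
  simp_rw [MeasureTheory.integral_const_mul]

theorem integrable_mul_abs_mul_add_pow {g : ℝ → ℝ}
    (hg : ∀ k : ℕ, Integrable fun u => g u * u ^ k) (a b : ℝ) (q : ℕ) :
    Integrable fun u => g u * |a * u + b| ^ q := by
  have hpoly : Integrable fun u => g u * (a * u + b) ^ q := by
    simp_rw [add_pow, mul_sum]
    exact integrable_finsetSum _ fun k _ =>
      ((hg k).const_mul (a ^ k * b ^ (q - k) * q.choose k)).congr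
        (ae_of_all _ fun u => by ring)
  have hmeas : AEStronglyMeasurable g := by simpa using (hg 0).aestronglyMeasurable
  exact hpoly.mono (hmeas.mul (by fun_prop : Continuous _).aestronglyMeasurable)
    (ae_of_all _ fun u => by simp)

theorem integral_mul_abs_mul_add_pow_of_odd {g : ℝ → ℝ} (hg_even : ∀ u, g (-u) = g u)
    (hg : ∀ k : ℕ, Integrable fun u => g u * u ^ k) {a b : ℝ} (ha : 0 < a) (hb : 0 ≤ b)
    {q : ℕ} (hq : Odd q) :
    ∫ u, g u * |a * u + b| ^ q =
      2 * ((∑ k ∈ (range (q + 1)).filter (fun k => ¬Even k),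
              (q.choose k : ℝ) * a ^ k * b ^ (q - k) * ∫ u in Set.Ioi (b / a), g u * u ^ k) +
           ∑ k ∈ (range (q + 1)).filter Even,
              (q.choose k : ℝ) * a ^ k * b ^ (q - k) * ∫ u in (0 : ℝ)..(b / a), g u * u ^ k) := by
  set s := b / a
  set c : ℕ → ℝ := fun k => q.choose k * a ^ k * b ^ (q - k)
  have hs : 0 ≤ s := div_nonneg hb ha.le
  have hmonomial : ∀ u (t : Finset ℕ),
      g u * ∑ k ∈ t, (a * u) ^ k * b ^ (q - k) * q.choose k = g u * ∑ k ∈ t, c k * u ^ k :=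
    fun u t => congrArg _ (sum_congr rfl fun k _ => by simp only [c]; ring)
  have hF := integrable_mul_abs_mul_add_pow hg a b q
  have hsym : ∀ u, g u * |a * u + b| ^ q + g (-u) * |a * -u + b| ^ q =
      g u * (|a * u + b| ^ q + |-(a * u) + b| ^ q) := by
    intro u
    rw [hg_even, mul_neg]
    ring
  have hsmall : ∀ u ∈ Set.Ioc 0 s, g u * |a * u + b| ^ q + g (-u) * |a * -u + b| ^ q =
      2 * (g u * ∑ k ∈ (range (q + 1)).filter Even, c k * u ^ k) := by
    rintro u ⟨hu0, hus⟩
    have hau : a * u ≤ b := (le_div_iff₀' ha).mp hus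
    rw [hsym, abs_add_pow_add_abs_neg_add_pow_of_le (by positivity) hau, mul_left_comm,
      hmonomial]
  have hlarge : ∀ u ∈ Set.Ioi s, g u * |a * u + b| ^ q + g (-u) * |a * -u + b| ^ q =
      2 * (g u * ∑ k ∈ (range (q + 1)).filter (fun k => ¬Even k), c k * u ^ k) := by
    intro u hus
    have hau : b < a * u := (div_lt_iff₀' ha).mp hus
    rw [hsym, abs_add_pow_add_abs_neg_add_pow_of_ge hb hau.le hq, mul_left_comm, hmonomial]
  have hFsym : IntegrableOn (fun u => g u * |a * u + b| ^ q + g (-u) * |a * -u + b| ^ q)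
      (Set.Ioi 0) :=
    (hF.add hF.comp_neg).integrableOn
  rw [integral_eq_integral_Ioi_add_comp_neg hF,
    ← integral_interval_add_Ioi hFsym (hFsym.mono_set (Set.Ioi_subset_Ioi hs)),
    integral_of_le hs, setIntegral_congr_fun measurableSet_Ioc hsmall,
    setIntegral_congr_fun measurableSet_Ioi hlarge, MeasureTheory.integral_const_mul,
    MeasureTheory.integral_const_mul, integral_mul_sum_pow _ fun k _ => (hg k).integrableOn,
    integral_mul_sum_pow _ fun k _ => (hg k).integrableOn]
  simp_rw [integral_of_le hs]
  ring

/-- Even-`p` normal-ratio density integral, case `b > 0`: for even `p ≥ 2`, `M > 0`,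
`b = -K/(2M) > 0`, `a = L/M - K²/(4M²) > 0`,
`∫ e^{-½M(z² + (K/M)z + L/M)} |z|^{p-1} dz
  = 2a e^{-½Ma} [ Σ_{i=1}^{p/2} C(p-1, p-2i) a^{2i-1} b^{p-2i} ∫_{b/a}^∞ e^{-½Ma²u²} u^{2i-1} du
    + Σ_{i=0}^{(p-2)/2} C(p-1, p-1-2i) a^{2i} b^{p-1-2i} ∫_0^{b/a} e^{-½Ma²u²} u^{2i} du ]`. -/
theorem normal_ratio_density_even_pos (p : ℕ) (hp : 2 ≤ p) (heven : Even p)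
    (M K L b a : ℝ) (hM : 0 < M)
    (hb : b = -K / (2 * M)) (ha : a = L / M - K ^ 2 / (4 * M ^ 2))
    (ha' : 0 < a) (hb' : 0 < b) :
    ∫ z : ℝ, Real.exp (-(1 / 2) * M * (z ^ 2 + (K / M) * z + L / M)) * |z| ^ (p - 1) =
      2 * a * Real.exp (-(1 / 2) * M * a) *
        ((∑ i ∈ Finset.Icc 1 (p / 2),
            (Nat.choose (p - 1) (p - 2 * i) : ℝ) * a ^ (2 * i - 1) * b ^ (p - 2 * i) *
              ∫ u in Set.Ioi (b / a),
                Real.exp (-(1 / 2) * M * a ^ 2 * u ^ 2) * u ^ (2 * i - 1)) +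
          ∑ i ∈ Finset.range ((p - 2) / 2 + 1),
            (Nat.choose (p - 1) (p - 1 - 2 * i) : ℝ) * a ^ (2 * i) * b ^ (p - 1 - 2 * i) *
              ∫ u in (0 : ℝ)..(b / a),
                Real.exp (-(1 / 2) * M * a ^ 2 * u ^ 2) * u ^ (2 * i)) := by
  obtain ⟨m, rfl⟩ := heven
  set g : ℝ → ℝ := fun u => Real.exp (-(1 / 2) * M * a ^ 2 * u ^ 2)
  have hg : ∀ k : ℕ, Integrable fun u => g u * u ^ k := fun k =>
    (integrable_exp_neg_mul_sq_mul_pow (c := 1 / 2 * M * a ^ 2) (by positivity) k).congr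
      (ae_of_all _ fun u => by simp only [g]; ring_nf)
  have hcomplete : ∀ z, -(1 / 2) * M * (z ^ 2 + (K / M) * z + L / M) =
      -(1 / 2) * M * a + -(1 / 2) * M * (z - b) ^ 2 := by
    intro z
    rw [hb, ha]
    field_simp
    ring
  have hodd : Odd (m + m - 1) := ⟨m - 1, by omega⟩
  calc _ = Real.exp (-(1 / 2) * M * a) *
        ∫ z, Real.exp (-(1 / 2) * M * (z - b) ^ 2) * |z| ^ (m + m - 1) := by
        simp_rw [hcomplete, Real.exp_add, mul_assoc]
        exact MeasureTheory.integral_const_mul _ _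
    _ = Real.exp (-(1 / 2) * M * a) * (a * ∫ u, g u * |a * u + b| ^ (m + m - 1)) := by
        rw [integral_eq_mul_integral_comp_mul_add _ ha' b]
        simp only [g, add_sub_cancel_right, mul_pow, mul_assoc]
    _ = _ := by
        rw [integral_mul_abs_mul_add_pow_of_odd (fun u => by simp [g]) hg ha' hb'.le hodd,
          show m + m - 1 + 1 = 2 * m by omega, sum_filter_odd_range_two_mul,
          sum_filter_even_range_two_mul, show (m + m) / 2 = m by omega,
          show (m + m - 2) / 2 + 1 = m by omega]
        rw [show ∀ x y S : ℝ, x * (y * (2 * S)) = 2 * y * x * S from fun _ _ _ => by ring]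
        congr 2 <;> refine sum_congr rfl fun i hi => ?_
        · rw [mem_Icc] at hi
          rw [show m + m - 2 * i = m + m - 1 - (2 * i - 1) by omega, Nat.choose_symm (by omega)]
        · rw [mem_range] at hi
          rw [Nat.choose_symm (by omega)]
end
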